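/- Let r ≥ 2 and n ≥ 1 be integers, let l be an integer with 0 ≤ l ≤ n, let k ≥ 0 be an integer, and let ε ∈ {0,1,…,r−1}^n be given by ε_i = 1 for 1 ≤ i ≤ l and ε_i = 0 for l < i ≤ n. Let ρ be the permutation of {1,…,n} with ρ(i) = l+1−i for 1 ≤ i ≤ l and ρ(i) = i for l < i ≤ n. Fix a permutation π of {1,…,n}, set γ = (ε_{π(1)},…,ε_{π(n)}), set σ = ρ∘π, and let D = Des(σ) = {i ∈ {1,…,n−1} : σ(i) > σ(i+1)}. Let A be the set of α ∈ ℤ_{≥0}^n such that α_{σ(1)} ≤ k − ε_{σ(1)}, α_{σ(i)} ≥ α_{σ(i+1)} for all 1 ≤ i ≤ n−1, and α_{σ(i)} > α_{σ(i+1)} whenever i ∈ D. Then the map sending α to λ = (λ_1,…,λ_n) with λ_i = α_{σ(i)} − |{d ∈ D : d ≥ i}| is a bijection from A onto the set of weakly decreasing λ ∈ ℤ_{≥0}^n with λ_1 ≤ k − des(γ,π), and it satisfies ∑_{i=1}^n λ_i = ∑_{i=1}^n α_i − maj(γ,π). -/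

import Mathlib

open Finset

/-- 1-based value of `π` at position `i ∈ {1,…,n}`, with the convention `π(0) = 0`. -/
def wval {n : ℕ} (π : Equiv.Perm (Fin n)) (i : ℕ) : ℕ :=
  if h : 1 ≤ i ∧ i ≤ n then (π ⟨i - 1, by omega⟩ : ℕ) + 1 else 0

/-- Color at position `i` (1-based), with the convention `ε_0 = 0`. -/
def wcolor {n : ℕ} (ε : Fin n → ℕ) (i : ℕ) : ℕ :=
  if h : 1 ≤ i ∧ i ≤ n then ε ⟨i - 1, by omega⟩ else 0

/-- The Biagioli–Zeng order on colored letters: `(j,c) > (k,d)`. -/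
def bzGT (a b : ℕ × ℕ) : Prop :=
  (a.2 = 0 ∧ b.2 = 0 ∧ b.1 < a.1) ∨ (0 < a.2 ∧ 0 < b.2 ∧ a.1 < b.1) ∨ (a.2 = 0 ∧ 0 < b.2)

instance (a b : ℕ × ℕ) : Decidable (bzGT a b) := by unfold bzGT; exact inferInstance

/-- The descent set `Des(ε,π) ⊆ {0,…,n-1}` of a colored permutation. -/
def DesBZ {n : ℕ} (ε : Fin n → ℕ) (π : Equiv.Perm (Fin n)) : Finset ℕ :=
  (Finset.range n).filter fun i =>
    bzGT (wval π i, wcolor ε i) (wval π (i + 1), wcolor ε (i + 1))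

def desBZ {n : ℕ} (ε : Fin n → ℕ) (π : Equiv.Perm (Fin n)) : ℕ := (DesBZ ε π).card

def majBZ {n : ℕ} (ε : Fin n → ℕ) (π : Equiv.Perm (Fin n)) : ℕ := ∑ i ∈ DesBZ ε π, i

/-- The color weight `col(ε)`. -/
def colwt {n : ℕ} (ε : Fin n → ℕ) : ℕ := ∑ i, ε i

/-- Ordinary descent set `{i ∈ {1,…,n-1} : σ(i) > σ(i+1)}` (1-based). -/
def ordDes {n : ℕ} (σ : Equiv.Perm (Fin n)) : Finset ℕ :=
  (Finset.range n).filter fun i => 1 ≤ i ∧ wval σ (i + 1) < wval σ i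

noncomputable def qP : MvPolynomial (Fin 2) ℤ := MvPolynomial.X 0
noncomputable def uP : MvPolynomial (Fin 2) ℤ := MvPolynomial.X 1
noncomputable def qNat (m : ℕ) : MvPolynomial (Fin 2) ℤ := ∑ i ∈ Finset.range m, qP ^ i
noncomputable def uNat (m : ℕ) : MvPolynomial (Fin 2) ℤ := ∑ i ∈ Finset.range m, uP ^ i

/-- The monomial `m'(j,k)`. -/
noncomputable def mPrime (j k : ℕ) : MvPolynomial (Fin 2) ℤ :=
  if j ≤ k then qP ^ j else qP ^ ((j - 1) % k) * uP ^ ((j - 1) / k)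

/-- Lattice points of `cone(F_ε)` at height `k`. -/
def Lset {n : ℕ} (ε : Fin n → ℕ) (k : ℕ) : Finset (Fin n → ℕ) :=
  Fintype.piFinset fun i =>
    if 0 < ε i then Finset.Ioc (k * ε i) (k * (ε i + 1)) else Finset.Icc 0 k

/-!
Giving the first `l` letters colour `1` and reversing them by `ρ` makes the colored order on the
letters of `(γ, π)` the natural order on the letters of `σ = ρπ`. So the colored descents of
`(γ, π)` are the descents of `σ`, together with position `0` exactly when the first letter is
colored: `des(γ, π) = |D| + ε_{σ(1)}` and `maj(γ, π) = ∑ D`. What remains is the classical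
staircase subtraction: removing `#{d ∈ D : d ≥ i}` from the `i`-th part turns sequences that
decrease weakly, and strictly across `D`, into partitions, lowering the total by `∑ D`.
-/

theorem Fin.antitone_iff_forall_succ_le {α : Type*} [Preorder α] {n : ℕ} {f : Fin n → α} :
    Antitone f ↔ ∀ (i : ℕ) (h : i + 1 < n), f ⟨i + 1, h⟩ ≤ f ⟨i, Nat.lt_of_succ_lt h⟩ := by
  cases n with
  | zero => exact ⟨fun _ i h => absurd h (by omega), fun _ a => a.elim0⟩
  | succ n =>
    rw [Fin.antitone_iff_succ_le]
    exact ⟨fun hf i h => hf ⟨i, by omega⟩, fun hf i => hf i (by omega)⟩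

namespace DescentShift

variable (D : Finset ℕ)

-- Positions are 0-based here: `countAbove D j` is the paper's `|{d ∈ D : d ≥ i}|` for `i = j + 1`.
def countAbove (j : ℕ) : ℕ := #{d ∈ D | j + 1 ≤ d}

theorem countAbove_zero (hD : ∀ d ∈ D, 1 ≤ d) : countAbove D 0 = #D := by
  rw [countAbove, Finset.filter_true_of_mem hD]

theorem countAbove_eq_zero {j : ℕ} (hD : ∀ d ∈ D, d ≤ j) : countAbove D j = 0 := by
  rw [countAbove, Finset.card_eq_zero, Finset.filter_eq_empty_iff]
  exact fun d hd => by have := hD d hd; omega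

theorem countAbove_eq_succ_add (j : ℕ) :
    countAbove D j = countAbove D (j + 1) + if j + 1 ∈ D then 1 else 0 := by
  simp only [countAbove, Finset.card_filter, ← Finset.sum_ite_eq D (j + 1) fun _ => 1,
    ← Finset.sum_add_distrib]
  exact Finset.sum_congr rfl fun d _ => by split_ifs <;> omega

theorem sum_countAbove {n : ℕ} (hD : ∀ d ∈ D, d ≤ n) :
    ∑ j : Fin n, countAbove D j = ∑ d ∈ D, d := by
  rw [Fin.sum_univ_eq_sum_range (countAbove D)]
  simp only [countAbove, Finset.card_filter]
  rw [Finset.sum_comm]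
  refine Finset.sum_congr rfl fun d hd => ?_
  have hrange : {j ∈ Finset.range n | j + 1 ≤ d} = Finset.range d := by
    ext j
    simp only [Finset.mem_filter, Finset.mem_range]
    have := hD d hd
    omega
  rw [← Finset.card_filter, hrange, Finset.card_range]

variable {n : ℕ}

def shift (β : Fin n → ℕ) (j : Fin n) : ℤ := β j - countAbove D j

def Chains (hn : 0 < n) (m : ℤ) : Set (Fin n → ℕ) :=
  {β | (β ⟨0, hn⟩ : ℤ) ≤ m ∧ ∀ (i : ℕ) (h : i + 1 < n),
    β ⟨i + 1, h⟩ ≤ β ⟨i, Nat.lt_of_succ_lt h⟩ ∧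
      (i + 1 ∈ D → β ⟨i + 1, h⟩ < β ⟨i, Nat.lt_of_succ_lt h⟩)}

def Partitions (hn : 0 < n) (m : ℤ) : Set (Fin n → ℤ) :=
  {lam | (∀ j, 0 ≤ lam j) ∧ Antitone lam ∧ lam ⟨0, hn⟩ ≤ m}

theorem shift_succ_le_iff (β : Fin n → ℕ) (i : ℕ) (h : i + 1 < n) :
    shift D β ⟨i + 1, h⟩ ≤ shift D β ⟨i, Nat.lt_of_succ_lt h⟩ ↔
      β ⟨i + 1, h⟩ ≤ β ⟨i, Nat.lt_of_succ_lt h⟩ ∧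
        (i + 1 ∈ D → β ⟨i + 1, h⟩ < β ⟨i, Nat.lt_of_succ_lt h⟩) := by
  have := countAbove_eq_succ_add D i
  simp only [shift]
  split_ifs at this with hi <;> simp only [hi, forall_const, IsEmpty.forall_iff, and_true] <;>
    omega

theorem shift_mem_partitions_iff (hn : 0 < n) (hD : ∀ d ∈ D, 1 ≤ d ∧ d < n) (m : ℤ)
    (β : Fin n → ℕ) : shift D β ∈ Partitions hn (m - #D) ↔ β ∈ Chains D hn m := by
  have htop : shift D β ⟨0, hn⟩ = β ⟨0, hn⟩ - #D := by
    rw [shift, countAbove_zero D fun d hd => (hD d hd).1]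
  have hbot : 0 ≤ shift D β ⟨n - 1, by omega⟩ := by
    rw [shift, countAbove_eq_zero (j := n - 1) D fun d hd => by have := hD d hd; omega]
    simp
  simp only [Partitions, Chains, Set.mem_ofPred_eq, Fin.antitone_iff_forall_succ_le,
    shift_succ_le_iff, htop]
  refine ⟨fun ⟨_, hchain, hle⟩ => ⟨by linarith, hchain⟩,
    fun ⟨hle, hchain⟩ => ⟨?_, hchain, by linarith⟩⟩
  have hanti : Antitone (shift D β) := Fin.antitone_iff_forall_succ_le.2 fun i h =>
    (shift_succ_le_iff D β i h).2 (hchain i h)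
  exact fun j => hbot.trans (hanti (Fin.mk_le_mk.2 (by omega)))

theorem shift_injective : Function.Injective (shift (n := n) D) := by
  intro β β' h
  funext j
  have := congrFun h j
  simp only [shift, sub_left_inj, Nat.cast_inj] at this
  exact this

theorem bijOn_shift (hn : 0 < n) (hD : ∀ d ∈ D, 1 ≤ d ∧ d < n) (m : ℤ) :
    Set.BijOn (shift D) (Chains D hn m) (Partitions hn (m - #D)) := by
  refine ⟨fun β hβ => (shift_mem_partitions_iff D hn hD m β).2 hβ,
    (shift_injective D).injOn, fun lam hlam => ?_⟩
  have hlift : shift D (fun j => (lam j + countAbove D j).toNat) = lam := by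
    funext j
    simp only [shift]
    rw [Int.toNat_of_nonneg (add_nonneg (hlam.1 j) (Int.natCast_nonneg _))]
    ring
  refine ⟨_, (shift_mem_partitions_iff D hn hD m _).1 ?_, hlift⟩
  rwa [hlift]

theorem sum_shift (hD : ∀ d ∈ D, d ≤ n) (β : Fin n → ℕ) :
    ∑ j, shift D β j = ∑ j, (β j : ℤ) - ∑ d ∈ D, d := by
  simp only [shift, Finset.sum_sub_distrib]
  rw [← sum_countAbove D hD]
  push_cast
  rfl

end DescentShift

section ColoredDescents

variable {n : ℕ}

theorem wval_succ (τ : Equiv.Perm (Fin n)) {m : ℕ} (h : m < n) :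
    wval τ (m + 1) = (τ ⟨m, h⟩ : ℕ) + 1 := by
  rw [wval, dif_pos (by omega)]
  rfl

theorem wcolor_succ (e : Fin n → ℕ) {m : ℕ} (h : m < n) : wcolor e (m + 1) = e ⟨m, h⟩ := by
  rw [wcolor, dif_pos (by omega)]
  rfl

theorem one_le_and_lt_of_mem_ordDes {σ : Equiv.Perm (Fin n)} {d : ℕ} (hd : d ∈ ordDes σ) :
    1 ≤ d ∧ d < n := by
  simp only [ordDes, Finset.mem_filter, Finset.mem_range] at hd
  exact ⟨hd.2.1, hd.1⟩

theorem zero_mem_DesBZ_iff (hn : 0 < n) (γ : Fin n → ℕ) (π : Equiv.Perm (Fin n)) :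
    0 ∈ DesBZ γ π ↔ 0 < γ ⟨0, hn⟩ := by
  simp [DesBZ, bzGT, wval, wcolor, hn]

theorem DesBZ_erase_zero {ε : Fin n → ℕ} {ρ : Equiv.Perm (Fin n)}
    (hρ : ∀ a b : Fin n, bzGT ((a : ℕ) + 1, ε a) ((b : ℕ) + 1, ε b) ↔ ρ b < ρ a)
    (π : Equiv.Perm (Fin n)) : (DesBZ (fun i => ε (π i)) π).erase 0 = ordDes (ρ * π) := by
  ext i
  rcases i with _ | i
  · simp [ordDes]
  simp only [Finset.mem_erase, DesBZ, ordDes, Finset.mem_filter, Finset.mem_range]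
  by_cases hi : i + 1 < n
  · rw [wval_succ π (by omega : i < n), wval_succ π hi, wcolor_succ _ (by omega : i < n),
      wcolor_succ _ hi, wval_succ _ (by omega : i < n), wval_succ _ hi, hρ, Fin.lt_def]
    simp only [Equiv.Perm.mul_apply]
    omega
  · omega

theorem desBZ_eq_card_erase_add (hn : 0 < n) {γ : Fin n → ℕ} (hγ : γ ⟨0, hn⟩ ≤ 1)
    (π : Equiv.Perm (Fin n)) : desBZ γ π = #((DesBZ γ π).erase 0) + γ ⟨0, hn⟩ := by
  rw [desBZ]
  by_cases h0 : 0 ∈ DesBZ γ π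
  · rw [← Finset.card_erase_add_one h0]
    have := (zero_mem_DesBZ_iff hn γ π).1 h0
    omega
  · rw [Finset.erase_eq_of_notMem h0]
    have := (zero_mem_DesBZ_iff hn γ π).not.1 h0
    omega

theorem majBZ_eq_sum_erase (γ : Fin n → ℕ) (π : Equiv.Perm (Fin n)) :
    majBZ γ π = ∑ i ∈ (DesBZ γ π).erase 0, i :=
  (Finset.sum_erase _ (a := 0) rfl).symm

end ColoredDescents

section PrefixColoring

variable {n l : ℕ} {ε : Fin n → ℕ} {ρ : Equiv.Perm (Fin n)}

/-- Colored letters precede uncolored ones and are ordered backwards, so reversing the colored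
block turns the colored order into the natural one. -/
theorem bzGT_iff_of_reverse_prefix (hε : ∀ i : Fin n, ε i = if (i : ℕ) < l then 1 else 0)
    (hρ : ∀ i : Fin n, (ρ i : ℕ) = if (i : ℕ) < l then l - 1 - (i : ℕ) else (i : ℕ))
    (a b : Fin n) : bzGT ((a : ℕ) + 1, ε a) ((b : ℕ) + 1, ε b) ↔ ρ b < ρ a := by
  rw [bzGT, hε a, hε b, Fin.lt_def, hρ a, hρ b]
  split_ifs <;> simp <;> omega

theorem coloring_apply_reverse_prefix (hε : ∀ i : Fin n, ε i = if (i : ℕ) < l then 1 else 0)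
    (hρ : ∀ i : Fin n, (ρ i : ℕ) = if (i : ℕ) < l then l - 1 - (i : ℕ) else (i : ℕ))
    (x : Fin n) : ε (ρ x) = ε x := by
  have hx := hρ x
  rw [hε, hε]
  split_ifs at hx ⊢ <;> omega

end PrefixColoring

theorem composition_partition_bijection (n : ℕ) (hn : 1 ≤ n)
    (l : ℕ) (k : ℕ) (ε : Fin n → ℕ)
    (hε : ∀ i : Fin n, ε i = if (i : ℕ) < l then 1 else 0)
    (ρ : Equiv.Perm (Fin n))
    (hρ : ∀ i : Fin n, (ρ i : ℕ) = if (i : ℕ) < l then l - 1 - (i : ℕ) else (i : ℕ))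
    (π : Equiv.Perm (Fin n))
    (σ : Equiv.Perm (Fin n)) (hσ : σ = ρ * π)
    (γ : Fin n → ℕ) (hγ : γ = fun i => ε (π i))
    (D : Finset ℕ) (hD : D = ordDes σ)
    (A : Set (Fin n → ℕ))
    (hA : A = {α : Fin n → ℕ | ((α (σ ⟨0, by omega⟩) : ℤ) ≤ (k : ℤ) - (ε (σ ⟨0, by omega⟩) : ℤ)) ∧
        ∀ (i : ℕ) (h : i + 1 < n),
          α (σ ⟨i + 1, h⟩) ≤ α (σ ⟨i, by omega⟩) ∧
            (i + 1 ∈ D → α (σ ⟨i + 1, h⟩) < α (σ ⟨i, by omega⟩))})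
    (B : Set (Fin n → ℤ))
    (hB : B = {lam : Fin n → ℤ | (∀ j, 0 ≤ lam j) ∧ (∀ j₁ j₂ : Fin n, j₁ ≤ j₂ → lam j₂ ≤ lam j₁) ∧
        lam ⟨0, by omega⟩ ≤ (k : ℤ) - (desBZ γ π : ℤ)})
    (f : (Fin n → ℕ) → Fin n → ℤ)
    (hf : f = fun (α : Fin n → ℕ) (j : Fin n) => (α (σ j) : ℤ) - ((D.filter fun d => (j : ℕ) + 1 ≤ d).card : ℤ)) :
    Set.BijOn f A B ∧
      ∀ α ∈ A, (∑ j, f α j) = (∑ j, (α j : ℤ)) - (majBZ γ π : ℤ) := by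
  have hDes : (DesBZ γ π).erase 0 = D := by
    rw [hγ, hD, hσ, DesBZ_erase_zero (bzGT_iff_of_reverse_prefix hε hρ)]
  have hD_bounds : ∀ d ∈ D, 1 ≤ d ∧ d < n := fun d hd => one_le_and_lt_of_mem_ordDes (hD ▸ hd)
  have hγ0 : γ ⟨0, hn⟩ = ε (σ ⟨0, hn⟩) := by
    rw [hγ, hσ, Equiv.Perm.mul_apply, coloring_apply_reverse_prefix hε hρ]
  have hdes : desBZ γ π = #D + ε (σ ⟨0, hn⟩) := by
    rw [desBZ_eq_card_erase_add hn (by rw [hγ0, hε]; split_ifs <;> simp), hDes, hγ0]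
  have hB' : B = DescentShift.Partitions hn ((k - ε (σ ⟨0, hn⟩) : ℤ) - #D) := by
    rw [hB, hdes]
    push_cast
    rw [sub_sub, add_comm (#D : ℤ)]
    rfl
  have hf' : f = DescentShift.shift D ∘ fun α => α ∘ σ := hf
  have hA' : A = (fun α => α ∘ σ) ⁻¹' DescentShift.Chains D hn (k - ε (σ ⟨0, hn⟩)) := hA
  refine ⟨?_, fun α _ => ?_⟩
  · rw [hf', hA', hB']
    exact (DescentShift.bijOn_shift D hn hD_bounds _).comp <| Function.Bijective.bijOn_preimage
      ⟨σ.surjective.injective_comp_right, σ.injective.surjective_comp_right⟩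
  rw [hf', Function.comp_apply,
    DescentShift.sum_shift D (fun d hd => (hD_bounds d hd).2.le), majBZ_eq_sum_erase, hDes]
  push_cast
  congr 1
  exact Equiv.sum_comp σ fun i => (α i : ℤ)
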